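/- (Splitting of entropy, Statement 2) Let γ₁, γ₂, p₁, p₂ ∈ [0,1] satisfy max{0, 2γ₁-1} ≤ p₁ ≤ γ₁, max{0, 2γ₂-1} ≤ p₂ ≤ γ₂, and set p := (p₁+p₂)/2. If p ≤ γ₁·γ₂, then H₄(p, γ₁-p, γ₂-p, 1+p-γ₁-γ₂) ≥ (1/2)·(H₄(p₁, γ₁-p₁, γ₁-p₁, 1+p₁-2γ₁) + H₄(p₂, γ₂-p₂, γ₂-p₂, 1+p₂-2γ₂)). -/

import Mathlib

noncomputable def H4 (a1 a2 a3 a4 : ℝ) : ℝ :=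
  -(a1 * Real.logb 2 a1) - a2 * Real.logb 2 a2 - a3 * Real.logb 2 a3 - a4 * Real.logb 2 a4

/-!
Work in nats and read `H₄(t, α - t, β - t, 1 + t - α - β)` as the entropy of the law `P_t^{α,β}` of
two bits `X, Y` with `P(X) = α`, `P(Y) = β`, `P(X ∧ Y) = t`; write `π^{α,β} = P_{αβ}^{α,β}` for the
product law and `h` for the binary entropy. For `0 < α, β < 1`, `H(P) = h(α) + h(β) - D(P ‖ π)`,
so joint convexity of relative entropy gives `½ (H(Q₁) + H(Q₂)) ≤ h(γ₁) + h(γ₂) - D(Q̄_p ‖ R̄)`,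
where `Qᵢ = P_{pᵢ}^{γᵢ,γᵢ}`, `Q̄_t = P_t^{γ̄,γ̄}` with `γ̄ = (γ₁ + γ₂)/2` (so `Q̄_p` is the
average of the `Qᵢ`), and `R̄` is the average of the `π^{γᵢ,γᵢ}`. The map
`t ↦ H(P_t^{γ₁,γ₂}) + D(Q̄_t ‖ R̄)` is antitone: off the diagonal by the log-sum inequality, on the
diagonal because `R̄₁₀ R̄₀₁ ≤ R̄₁₁ R̄₀₀`. At `t = γ₁γ₂` its value is
`h(γ₁) + h(γ₂) + D(Q̄_t ‖ R̄) ≥ h(γ₁) + h(γ₂)`, and `p ≤ γ₁γ₂` closes the chain. If some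
`γᵢ ∈ {0, 1}`, then `Qᵢ` is a point mass and the claim is concavity of `-x log x`.
-/

open Real Set

lemma mul_log_div_eq_sub (x : ℝ) {r : ℝ} (hr : r ≠ 0) :
    x * log (x / r) = x * log x - x * log r := by
  rcases eq_or_ne x 0 with rfl | hx
  · simp
  · rw [log_div hx hr, mul_sub]

lemma sub_le_mul_log_div {x r : ℝ} (hx : 0 ≤ x) (hr : 0 < r) : x - r ≤ x * log (x / r) := by
  rcases hx.eq_or_lt with rfl | hx
  · simpa using hr.le
  · have h := mul_le_mul_of_nonneg_left (one_sub_inv_le_log_of_pos (div_pos hx hr)) hx.le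
    rwa [inv_div, mul_sub, mul_one, mul_div_cancel₀ _ hx.ne'] at h

-- Log-sum inequality: convexity of `x log x` at `a / A`, `b / B` with weights `∝ A, B`.
lemma add_mul_log_div_add_le {a b A B : ℝ} (ha : 0 ≤ a) (hb : 0 ≤ b) (hA : 0 < A) (hB : 0 < B) :
    (a + b) * log ((a + b) / (A + B)) ≤ a * log (a / A) + b * log (b / B) := by
  have hAB : 0 < A + B := add_pos hA hB
  have h := convexOn_mul_log.2 (mem_Ici.2 (div_nonneg ha hA.le))
    (mem_Ici.2 (div_nonneg hb hB.le)) (div_pos hA hAB).le (div_pos hB hAB).le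
    (by field_simp)
  have hmix : A / (A + B) * (a / A) + B / (A + B) * (b / B) = (a + b) / (A + B) := by
    field_simp
  simp only [smul_eq_mul, hmix] at h
  calc (a + b) * log ((a + b) / (A + B))
      = (A + B) * ((a + b) / (A + B) * log ((a + b) / (A + B))) := by field_simp
    _ ≤ _ := mul_le_mul_of_nonneg_left h hAB.le
    _ = _ := by field_simp

section
variable {ι : Type*} [Fintype ι]

noncomputable def shannonEntropy (P : ι → ℝ) : ℝ := ∑ i, negMulLog (P i)

noncomputable def relEntropy (P R : ι → ℝ) : ℝ := ∑ i, P i * log (P i / R i)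

theorem relEntropy_nonneg {P R : ι → ℝ} (hP : ∀ i, 0 ≤ P i) (hR : ∀ i, 0 < R i)
    (hsum : ∑ i, P i = ∑ i, R i) : 0 ≤ relEntropy P R :=
  calc 0 = ∑ i, (P i - R i) := by rw [Finset.sum_sub_distrib, hsum, sub_self]
    _ ≤ relEntropy P R := Finset.sum_le_sum fun i _ ↦ sub_le_mul_log_div (hP i) (hR i)

theorem relEntropy_midpoint_le {P P' R R' : ι → ℝ} (hP : ∀ i, 0 ≤ P i) (hP' : ∀ i, 0 ≤ P' i)
    (hR : ∀ i, 0 < R i) (hR' : ∀ i, 0 < R' i) :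
    relEntropy (fun i ↦ (P i + P' i) / 2) (fun i ↦ (R i + R' i) / 2)
      ≤ (relEntropy P R + relEntropy P' R') / 2 := by
  rw [relEntropy, relEntropy, relEntropy, ← Finset.sum_add_distrib, Finset.sum_div]
  refine Finset.sum_le_sum fun i _ ↦ ?_
  rw [div_div_div_cancel_right₀ two_ne_zero, div_mul_eq_mul_div]
  gcongr
  exact add_mul_log_div_add_le (hP i) (hP' i) (hR i) (hR' i)

end

def twoBitTable (α β t : ℝ) : Bool × Bool → ℝ
  | (true, true) => t
  | (true, false) => α - t
  | (false, true) => β - t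
  | (false, false) => 1 + t - α - β

def indepTable (α β : ℝ) : Bool × Bool → ℝ
  | (true, true) => α * β
  | (true, false) => α * (1 - β)
  | (false, true) => (1 - α) * β
  | (false, false) => (1 - α) * (1 - β)

lemma sum_twoBitTable (α β t : ℝ) : ∑ i, twoBitTable α β t i = 1 := by
  simp only [Fintype.sum_prod_type, Fintype.sum_bool, twoBitTable]
  ring

lemma twoBitTable_mul_eq_indepTable (α β : ℝ) : twoBitTable α β (α * β) = indepTable α β := by
  funext ⟨x, y⟩
  cases x <;> cases y <;> simp only [twoBitTable, indepTable] <;> ring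

lemma twoBitTable_midpoint (α β t α' β' t' : ℝ) :
    (fun i ↦ (twoBitTable α β t i + twoBitTable α' β' t' i) / 2)
      = twoBitTable ((α + α') / 2) ((β + β') / 2) ((t + t') / 2) := by
  funext ⟨x, y⟩
  cases x <;> cases y <;> simp only [twoBitTable] <;> ring

lemma shannonEntropy_twoBitTable (α β t : ℝ) :
    shannonEntropy (twoBitTable α β t)
      = negMulLog t + negMulLog (α - t) + negMulLog (β - t) + negMulLog (1 + t - α - β) := by
  simp only [shannonEntropy, Fintype.sum_prod_type, Fintype.sum_bool, twoBitTable]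
  ring

lemma relEntropy_twoBitTable (α β t : ℝ) (R : Bool × Bool → ℝ) :
    relEntropy (twoBitTable α β t) R
      = t * log (t / R (true, true)) + (α - t) * log ((α - t) / R (true, false))
        + (β - t) * log ((β - t) / R (false, true))
        + (1 + t - α - β) * log ((1 + t - α - β) / R (false, false)) := by
  simp only [relEntropy, Fintype.sum_prod_type, Fintype.sum_bool, twoBitTable]
  ring

lemma shannonEntropy_indepTable (α β : ℝ) :
    shannonEntropy (indepTable α β) = binEntropy α + binEntropy β := by
  simp only [shannonEntropy, Fintype.sum_prod_type, Fintype.sum_bool, indepTable, negMulLog_mul,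
    binEntropy_eq_negMulLog_add_negMulLog_one_sub]
  ring

lemma relEntropy_twoBitTable_indepTable {α β : ℝ} (hα₀ : α ≠ 0) (hα₁ : α ≠ 1) (hβ₀ : β ≠ 0)
    (hβ₁ : β ≠ 1) (t : ℝ) :
    relEntropy (twoBitTable α β t) (indepTable α β)
      = binEntropy α + binEntropy β - shannonEntropy (twoBitTable α β t) := by
  have hα₁' : 1 - α ≠ 0 := sub_ne_zero.2 hα₁.symm
  have hβ₁' : 1 - β ≠ 0 := sub_ne_zero.2 hβ₁.symm
  rw [relEntropy_twoBitTable, shannonEntropy_twoBitTable]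
  simp only [indepTable, mul_log_div_eq_sub _ (mul_ne_zero _ _), log_mul, *, ne_eq,
    not_false_eq_true, binEntropy_eq_negMulLog_add_negMulLog_one_sub, negMulLog]
  ring

lemma mul_log_jensen_gap_add_le {a b δ : ℝ} (ha : 0 ≤ a) (hb : 0 ≤ b) (hδ : 0 ≤ δ) :
    (a + δ) * log (a + δ) + (b + δ) * log (b + δ) - (a + b + 2 * δ) * log ((a + b) / 2 + δ)
      ≤ a * log a + b * log b - (a + b) * log ((a + b) / 2) := by
  rcases hδ.eq_or_lt with rfl | hδ
  · simp
  rcases (add_nonneg ha hb).eq_or_lt with hab | hab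
  · obtain ⟨rfl, rfl⟩ : a = 0 ∧ b = 0 := ⟨by linarith, by linarith⟩
    simp only [zero_add, add_zero, zero_div, log_zero, mul_zero, sub_self]
    linarith
  have hs : 0 < (a + b) / 2 := by positivity
  have h₁ := add_mul_log_div_add_le ha hδ.le hs hδ
  have h₂ := add_mul_log_div_add_le hb hδ.le hs hδ
  simp only [div_self hδ.ne', log_one, mul_zero, add_zero,
    mul_log_div_eq_sub _ hs.ne', mul_log_div_eq_sub _ (add_pos hs hδ).ne'] at h₁ h₂
  linarith

theorem shannonEntropy_add_relEntropy_antitone {α β t t' : ℝ} {R : Bool × Bool → ℝ}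
    (hR : ∀ i, 0 < R i)
    (hR_assoc : R (true, false) * R (false, true) ≤ R (true, true) * R (false, false))
    (htt' : t ≤ t') (hα : t' ≤ α) (hβ : t' ≤ β) :
    shannonEntropy (twoBitTable α β t')
        + relEntropy (twoBitTable ((α + β) / 2) ((α + β) / 2) t') R
      ≤ shannonEntropy (twoBitTable α β t)
        + relEntropy (twoBitTable ((α + β) / 2) ((α + β) / 2) t) R := by
  have hlog : log (R (true, false)) + log (R (false, true))
      ≤ log (R (true, true)) + log (R (false, false)) := by
    rw [← log_mul (hR _).ne' (hR _).ne', ← log_mul (hR _).ne' (hR _).ne']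
    exact log_le_log (mul_pos (hR _) (hR _)) hR_assoc
  have hgap := mul_log_jensen_gap_add_le (sub_nonneg.2 hα) (sub_nonneg.2 hβ) (sub_nonneg.2 htt')
  simp only [shannonEntropy_twoBitTable, relEntropy_twoBitTable,
    mul_log_div_eq_sub _ (hR _).ne', negMulLog]
  have hslope := mul_le_mul_of_nonneg_left hlog (sub_nonneg.2 htt')
  -- The diagonal `x log x` terms cancel: what is left is the Jensen gap of the off-diagonal
  -- entries plus a term linear in `t` whose slope is the log odds ratio of `R`.
  ring_nf at hgap hslope ⊢
  linarith

lemma twoBitTable_nonneg {α β t : ℝ} (ht : 0 ≤ t) (hα : t ≤ α) (hβ : t ≤ β)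
    (hαβ : α + β - 1 ≤ t) (i : Bool × Bool) : 0 ≤ twoBitTable α β t i := by
  rcases i with ⟨_ | _, _ | _⟩ <;> simp only [twoBitTable] <;> linarith

lemma indepTable_pos {α β : ℝ} (hα : α ∈ Ioo 0 1) (hβ : β ∈ Ioo 0 1) (i : Bool × Bool) :
    0 < indepTable α β i := by
  obtain ⟨hα₀, hα₁⟩ := hα
  obtain ⟨hβ₀, hβ₁⟩ := hβ
  rcases i with ⟨_ | _, _ | _⟩ <;> simp only [indepTable] <;> apply mul_pos <;> linarith

theorem shannonEntropy_twoBitTable_add_le_of_mem_Ioo {γ₁ γ₂ p₁ p₂ : ℝ}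
    (hγ₁ : γ₁ ∈ Ioo 0 1) (hγ₂ : γ₂ ∈ Ioo 0 1)
    (hp₁ : max 0 (2 * γ₁ - 1) ≤ p₁) (hp₁' : p₁ ≤ γ₁)
    (hp₂ : max 0 (2 * γ₂ - 1) ≤ p₂) (hp₂' : p₂ ≤ γ₂)
    (hp : (p₁ + p₂) / 2 ≤ γ₁ * γ₂) :
    shannonEntropy (twoBitTable γ₁ γ₁ p₁) + shannonEntropy (twoBitTable γ₂ γ₂ p₂)
      ≤ 2 * shannonEntropy (twoBitTable γ₁ γ₂ ((p₁ + p₂) / 2)) := by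
  rw [max_le_iff] at hp₁ hp₂
  obtain ⟨hγ₁₀, hγ₁₁⟩ := id hγ₁
  obtain ⟨hγ₂₀, hγ₂₁⟩ := id hγ₂
  set R : Bool × Bool → ℝ := fun i ↦ (indepTable γ₁ γ₁ i + indepTable γ₂ γ₂ i) / 2 with hR_def
  have hR : ∀ i, 0 < R i := fun i ↦
    half_pos (add_pos (indepTable_pos hγ₁ hγ₁ i) (indepTable_pos hγ₂ hγ₂ i))
  -- Cauchy–Schwarz for the vectors `(γ₁, γ₂)` and `(1 - γ₁, 1 - γ₂)`.
  have hR_assoc : R (true, false) * R (false, true) ≤ R (true, true) * R (false, false) := by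
    simp only [hR_def, indepTable]
    nlinarith [sq_nonneg (γ₁ * (1 - γ₂) - γ₂ * (1 - γ₁))]
  have hmix := relEntropy_midpoint_le
    (twoBitTable_nonneg hp₁.1 hp₁' hp₁' (by linarith))
    (twoBitTable_nonneg hp₂.1 hp₂' hp₂' (by linarith))
    (indepTable_pos hγ₁ hγ₁) (indepTable_pos hγ₂ hγ₂)
  rw [twoBitTable_midpoint, ← hR_def,
    relEntropy_twoBitTable_indepTable hγ₁₀.ne' hγ₁₁.ne hγ₁₀.ne' hγ₁₁.ne,
    relEntropy_twoBitTable_indepTable hγ₂₀.ne' hγ₂₁.ne hγ₂₀.ne' hγ₂₁.ne] at hmix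
  have hanti := shannonEntropy_add_relEntropy_antitone hR hR_assoc hp
    (mul_le_of_le_one_right hγ₁₀.le hγ₂₁.le) (mul_le_of_le_one_left hγ₂₀.le hγ₁₁.le)
  rw [twoBitTable_mul_eq_indepTable, shannonEntropy_indepTable] at hanti
  have hgibbs : 0 ≤ relEntropy (twoBitTable ((γ₁ + γ₂) / 2) ((γ₁ + γ₂) / 2) (γ₁ * γ₂)) R := by
    refine relEntropy_nonneg
      (twoBitTable_nonneg (by positivity) (by nlinarith) (by nlinarith) (by nlinarith)) hR ?_
    simp only [hR_def, sum_twoBitTable, ← Finset.sum_div, Finset.sum_add_distrib,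
      ← twoBitTable_mul_eq_indepTable]
    norm_num
  linarith

lemma negMulLog_le_two_mul_negMulLog_add_one_div_two {x : ℝ} (hx : 0 ≤ x) :
    negMulLog x ≤ 2 * negMulLog ((x + 1) / 2) := by
  have h := concaveOn_negMulLog.2 (mem_Ici.2 hx) (mem_Ici.2 zero_le_one)
    (by norm_num : (0 : ℝ) ≤ 1 / 2) (by norm_num : (0 : ℝ) ≤ 1 / 2) (by norm_num)
  simp only [smul_eq_mul, negMulLog_one, mul_zero, add_zero, mul_one] at h
  rw [show 1 / 2 * x + 1 / 2 = (x + 1) / 2 by ring] at h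
  linarith

lemma shannonEntropy_twoBitTable_comm (α β t : ℝ) :
    shannonEntropy (twoBitTable β α t) = shannonEntropy (twoBitTable α β t) := by
  simp only [shannonEntropy_twoBitTable]
  ring_nf

theorem shannonEntropy_twoBitTable_add_le_of_not_mem_Ioo {γ₁ γ₂ p₁ p₂ : ℝ}
    (hγ₁ : γ₁ ∉ Ioo 0 1)
    (hp₁ : max 0 (2 * γ₁ - 1) ≤ p₁) (hp₁' : p₁ ≤ γ₁)
    (hp₂ : max 0 (2 * γ₂ - 1) ≤ p₂) (hp₂' : p₂ ≤ γ₂)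
    (hp : (p₁ + p₂) / 2 ≤ γ₁ * γ₂) :
    shannonEntropy (twoBitTable γ₁ γ₁ p₁) + shannonEntropy (twoBitTable γ₂ γ₂ p₂)
      ≤ 2 * shannonEntropy (twoBitTable γ₁ γ₂ ((p₁ + p₂) / 2)) := by
  rw [max_le_iff] at hp₁ hp₂
  rw [mem_Ioo, not_and_or, not_lt, not_lt] at hγ₁
  obtain rfl | rfl : γ₁ = 0 ∨ γ₁ = 1 := by
    rcases hγ₁ with h | h
    exacts [Or.inl (by linarith), Or.inr (by linarith)]
  · obtain rfl : p₁ = 0 := by linarith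
    obtain rfl : p₂ = 0 := by linarith
    have h := negMulLog_le_two_mul_negMulLog_add_one_div_two (x := 1 - 2 * γ₂) (by linarith)
    simp only [shannonEntropy_twoBitTable]
    ring_nf at h ⊢
    simp only [negMulLog_zero, negMulLog_one, zero_mul, add_zero, zero_add]
    linarith
  · obtain rfl : p₁ = 1 := by linarith
    obtain rfl : p₂ = 2 * γ₂ - 1 := by linarith
    have h := negMulLog_le_two_mul_negMulLog_add_one_div_two (x := 2 * γ₂ - 1) (by linarith)
    simp only [shannonEntropy_twoBitTable]
    ring_nf at h ⊢
    simp only [negMulLog_zero, negMulLog_one, zero_mul, add_zero, zero_add]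
    linarith

theorem shannonEntropy_twoBitTable_add_le {γ₁ γ₂ p₁ p₂ : ℝ}
    (hp₁ : max 0 (2 * γ₁ - 1) ≤ p₁) (hp₁' : p₁ ≤ γ₁)
    (hp₂ : max 0 (2 * γ₂ - 1) ≤ p₂) (hp₂' : p₂ ≤ γ₂)
    (hp : (p₁ + p₂) / 2 ≤ γ₁ * γ₂) :
    shannonEntropy (twoBitTable γ₁ γ₁ p₁) + shannonEntropy (twoBitTable γ₂ γ₂ p₂)
      ≤ 2 * shannonEntropy (twoBitTable γ₁ γ₂ ((p₁ + p₂) / 2)) := by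
  by_cases hγ₁ : γ₁ ∈ Ioo 0 1
  · by_cases hγ₂ : γ₂ ∈ Ioo 0 1
    · exact shannonEntropy_twoBitTable_add_le_of_mem_Ioo hγ₁ hγ₂ hp₁ hp₁' hp₂ hp₂' hp
    · rw [add_comm, add_comm p₁, shannonEntropy_twoBitTable_comm γ₂ γ₁]
      exact shannonEntropy_twoBitTable_add_le_of_not_mem_Ioo hγ₂ hp₂ hp₂' hp₁ hp₁'
        (by linarith)
  · exact shannonEntropy_twoBitTable_add_le_of_not_mem_Ioo hγ₁ hp₁ hp₁' hp₂ hp₂' hp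

lemma H4_eq_div_log_two (a b c d : ℝ) :
    H4 a b c d = (negMulLog a + negMulLog b + negMulLog c + negMulLog d) / log 2 := by
  simp only [H4, logb, negMulLog]
  ring

theorem stmt_4_general (γ1 γ2 p1 p2 : ℝ)
    (hp1l : max 0 (2 * γ1 - 1) ≤ p1) (hp1u : p1 ≤ γ1)
    (hp2l : max 0 (2 * γ2 - 1) ≤ p2) (hp2u : p2 ≤ γ2)
    (hp : (p1 + p2) / 2 ≤ γ1 * γ2) :
    (1 / 2) * (H4 p1 (γ1 - p1) (γ1 - p1) (1 + p1 - 2 * γ1)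
      + H4 p2 (γ2 - p2) (γ2 - p2) (1 + p2 - 2 * γ2))
    ≤ H4 ((p1 + p2) / 2) (γ1 - (p1 + p2) / 2) (γ2 - (p1 + p2) / 2)
        (1 + (p1 + p2) / 2 - γ1 - γ2) := by
  have h := shannonEntropy_twoBitTable_add_le hp1l hp1u hp2l hp2u hp
  have two_mul_sub : ∀ p γ : ℝ, 1 + p - γ - γ = 1 + p - 2 * γ := fun _ _ ↦ by ring
  simp only [shannonEntropy_twoBitTable, two_mul_sub] at h
  simp only [H4_eq_div_log_two, ← add_div, ← mul_div_assoc]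
  gcongr
  linarith

theorem stmt_4 (γ1 γ2 p1 p2 : ℝ)
    (hγ1 : γ1 ∈ Set.Icc (0:ℝ) 1) (hγ2 : γ2 ∈ Set.Icc (0:ℝ) 1)
    (hp1l : max 0 (2 * γ1 - 1) ≤ p1) (hp1u : p1 ≤ γ1)
    (hp2l : max 0 (2 * γ2 - 1) ≤ p2) (hp2u : p2 ≤ γ2)
    (hp : (p1 + p2) / 2 ≤ γ1 * γ2) :
    (1 / 2) * (H4 p1 (γ1 - p1) (γ1 - p1) (1 + p1 - 2 * γ1)
      + H4 p2 (γ2 - p2) (γ2 - p2) (1 + p2 - 2 * γ2))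
    ≤ H4 ((p1 + p2) / 2) (γ1 - (p1 + p2) / 2) (γ2 - (p1 + p2) / 2)
        (1 + (p1 + p2) / 2 - γ1 - γ2) :=
  stmt_4_general γ1 γ2 p1 p2 hp1l hp1u hp2l hp2u hp
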